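/- Let n ≥ 3, L ⊆ ℝ^n be the Lorentz (second order) cone, and A a symmetric n×n matrix with exactly two distinct eigenvalues λ < μ with λ of multiplicity one. Then q_A(x) = ⟨Ax,x⟩ is spherically quasi-convex on S^{n-1} ∩ int(L) if and only if L contains an eigenvector of A corresponding to λ. -/

import Mathlib

open RealInnerProductSpace

noncomputable def geo {n : ℕ} (x y : EuclideanSpace ℝ (Fin n)) (t : ℝ) :
    EuclideanSpace ℝ (Fin n) :=
  (Real.cos (t * Real.arccos ⟪x, y⟫) -
      ⟪x, y⟫ * Real.sin (t * Real.arccos ⟪x, y⟫) / Real.sqrt (1 - ⟪x, y⟫ ^ 2)) • x +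
    (Real.sin (t * Real.arccos ⟪x, y⟫) / Real.sqrt (1 - ⟪x, y⟫ ^ 2)) • y

def IsMinimalGeodesic {n : ℕ} (γ : ℝ → EuclideanSpace ℝ (Fin n)) : Prop :=
  (∃ x y : EuclideanSpace ℝ (Fin n), ‖x‖ = 1 ∧ ‖y‖ = 1 ∧ y ≠ x ∧ y ≠ -x ∧
      ∀ t, γ t = geo x y t) ∨
  (∃ x v : EuclideanSpace ℝ (Fin n), ‖x‖ = 1 ∧ ‖v‖ = 1 ∧ ⟪x, v⟫ = 0 ∧
      ∀ t, γ t = Real.cos (Real.pi * t) • x + Real.sin (Real.pi * t) • v)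

def SphericallyConvex {n : ℕ} (S : Set (EuclideanSpace ℝ (Fin n))) : Prop :=
  ∀ γ : ℝ → EuclideanSpace ℝ (Fin n), IsMinimalGeodesic γ → γ 0 ∈ S → γ 1 ∈ S →
    ∀ t ∈ Set.Icc (0 : ℝ) 1, γ t ∈ S

def SphQuasiconvexOn {n : ℕ} (S : Set (EuclideanSpace ℝ (Fin n)))
    (f : EuclideanSpace ℝ (Fin n) → ℝ) : Prop :=
  ∀ γ : ℝ → EuclideanSpace ℝ (Fin n), IsMinimalGeodesic γ →
    (∀ t ∈ Set.Icc (0 : ℝ) 1, γ t ∈ S) →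
    ∀ t ∈ Set.Icc (0 : ℝ) 1, f (γ t) ≤ max (f (γ 0)) (f (γ 1))

/-! On the unit sphere `⟪A x, x⟫ = μ - (μ - λ) ⟪v₁, x⟫²`, so quasi-convexity along a minimal
geodesic from `x` to `y` says that `|⟪v₁, ·⟫|` does not drop below its smaller endpoint value.
The points of such an arc are combinations `a x + b y` with `a, b ≥ 0` and `a + b ≥ 1`.

If `v₁` or `-v₁` lies in `L`, self-duality of `L` makes `⟪±v₁, ·⟫` positive on `int L`, hence
at least the minimum of its endpoint values along every arc. If neither does, there are unit
vectors `x, y ∈ int L` on which `⟪v₁, ·⟫` has opposite signs; the arc between them stays in the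
convex cone `int L`, and where `⟪v₁, ·⟫` vanishes on it the form takes its maximal value `μ`. -/

open Topology

section LorentzCone

variable {E : Type*} [NormedAddCommGroup E] [InnerProductSpace ℝ E]

def lorentzCone (e : E) : Set E := {x | ‖x - ⟪e, x⟫ • e‖ ≤ ⟪e, x⟫}

def openLorentzCone (e : E) : Set E := {x | ‖x - ⟪e, x⟫ • e‖ < ⟪e, x⟫}

lemma mem_lorentzCone {e x : E} : x ∈ lorentzCone e ↔ ‖x - ⟪e, x⟫ • e‖ ≤ ⟪e, x⟫ := Iff.rfl

lemma mem_openLorentzCone {e x : E} : x ∈ openLorentzCone e ↔ ‖x - ⟪e, x⟫ • e‖ < ⟪e, x⟫ :=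
  Iff.rfl

lemma smul_mem_lorentzCone {e x : E} {c : ℝ} (hc : 0 ≤ c) (hx : x ∈ lorentzCone e) :
    c • x ∈ lorentzCone e := by
  have h : c • x - ⟪e, c • x⟫ • e = c • (x - ⟪e, x⟫ • e) := by
    rw [real_inner_smul_right, smul_sub, smul_smul]
  rw [mem_lorentzCone, h, norm_smul, Real.norm_of_nonneg hc, real_inner_smul_right]
  exact mul_le_mul_of_nonneg_left hx hc

lemma smul_add_smul_mem_openLorentzCone {e x y : E} {a b : ℝ} (ha : 0 ≤ a) (hb : 0 ≤ b)
    (hab : 0 < a + b) (hx : x ∈ openLorentzCone e) (hy : y ∈ openLorentzCone e) :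
    a • x + b • y ∈ openLorentzCone e := by
  have h : a • x + b • y - ⟪e, a • x + b • y⟫ • e =
      a • (x - ⟪e, x⟫ • e) + b • (y - ⟪e, y⟫ • e) := by
    rw [inner_add_right, real_inner_smul_right, real_inner_smul_right]
    module
  rw [mem_openLorentzCone] at hx hy ⊢
  rw [h, inner_add_right, real_inner_smul_right, real_inner_smul_right]
  calc ‖a • (x - ⟪e, x⟫ • e) + b • (y - ⟪e, y⟫ • e)‖
      ≤ a * ‖x - ⟪e, x⟫ • e‖ + b * ‖y - ⟪e, y⟫ • e‖ := by
        refine (norm_add_le _ _).trans_eq ?_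
        rw [norm_smul, norm_smul, Real.norm_of_nonneg ha, Real.norm_of_nonneg hb]
    _ < a * ⟪e, x⟫ + b * ⟪e, y⟫ := by
        rcases ha.lt_or_eq with ha | rfl
        · exact add_lt_add_of_lt_of_le (mul_lt_mul_of_pos_left hx ha)
            (mul_le_mul_of_nonneg_left hy.le hb)
        · simp only [zero_add, zero_mul] at hab ⊢
          exact mul_lt_mul_of_pos_left hy hab

lemma openLorentzCone_subset_interior (e : E) : openLorentzCone e ⊆ interior (lorentzCone e) :=
  interior_maximal (fun _ hx => le_of_lt (mem_openLorentzCone.mp hx))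
    (isOpen_lt (by fun_prop) (by fun_prop))

lemma inner_nonneg_of_mem_lorentzCone {e u k : E} (he : ‖e‖ = 1) (hu : u ∈ lorentzCone e)
    (hk : k ∈ lorentzCone e) : 0 ≤ ⟪u, k⟫ := by
  have hee : ⟪e, e⟫ = 1 := by rw [real_inner_self_eq_norm_sq, he, one_pow]
  have hsplit : ⟪u - ⟪e, u⟫ • e, k - ⟪e, k⟫ • e⟫ = ⟪u, k⟫ - ⟪e, u⟫ * ⟪e, k⟫ := by
    simp only [inner_sub_left, inner_sub_right, real_inner_smul_left, real_inner_smul_right, hee,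
      real_inner_comm u e]
    ring
  have hcs := neg_le_of_abs_le (abs_real_inner_le_norm (u - ⟪e, u⟫ • e) (k - ⟪e, k⟫ • e))
  have := mul_le_mul hu hk (norm_nonneg _) ((norm_nonneg _).trans hu)
  linarith

lemma inner_pos_of_mem_interior {K : Set E} {u z : E} (hK : ∀ k ∈ K, 0 ≤ ⟪u, k⟫) (hu : u ≠ 0)
    (hz : z ∈ interior K) : 0 < ⟪u, z⟫ := by
  have hnhds : ∀ᶠ δ in 𝓝 (0 : ℝ), z - δ • u ∈ K := by
    have hc : Continuous fun δ : ℝ => z - δ • u := by fun_prop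
    exact hc.continuousAt.preimage_mem_nhds (by simpa using mem_interior_iff_mem_nhds.mp hz)
  obtain ⟨δ, hδK, hδ⟩ :=
    ((hnhds.filter_mono nhdsWithin_le_nhds).and (self_mem_nhdsWithin (s := Set.Ioi 0))).exists
  have h := hK _ hδK
  rw [inner_sub_right, real_inner_smul_right, real_inner_self_eq_norm_sq] at h
  have : 0 < δ * ‖u‖ ^ 2 := mul_pos hδ (by positivity)
  linarith

lemma smul_mem_openLorentzCone {e x : E} {c : ℝ} (hc : 0 < c) (hx : x ∈ openLorentzCone e) :
    c • x ∈ openLorentzCone e := by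
  simpa using smul_add_smul_mem_openLorentzCone hc.le le_rfl (by simpa) hx hx

lemma ne_zero_of_mem_openLorentzCone {e x : E} (hx : x ∈ openLorentzCone e) : x ≠ 0 := by
  rintro rfl
  simp [mem_openLorentzCone] at hx

lemma abs_inner_lt_norm_of_not_mem_lorentzCone {e v : E} (hv : v ∉ lorentzCone e)
    (hv' : -v ∉ lorentzCone e) : |⟪e, v⟫| < ‖v - ⟪e, v⟫ • e‖ := by
  have hneg : -v - ⟪e, -v⟫ • e = -(v - ⟪e, v⟫ • e) := by
    rw [inner_neg_right]
    module
  rw [mem_lorentzCone, not_le] at hv hv'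
  rw [hneg, norm_neg, inner_neg_right] at hv'
  exact abs_lt.mpr ⟨by linarith, hv⟩

lemma exists_mem_openLorentzCone_inner_pos_neg {e v : E} (he : ‖e‖ = 1)
    (hv : |⟪e, v⟫| < ‖v - ⟪e, v⟫ • e‖) :
    ∃ x y, x ∈ openLorentzCone e ∧ y ∈ openLorentzCone e ∧ 0 < ⟪v, x⟫ ∧ ⟪v, y⟫ < 0 := by
  -- `x, y = e ± t w`: `t β < 1` keeps them in the cone, `t β² > |⟪e, v⟫|` separates the signs.
  set w := v - ⟪e, v⟫ • e
  set β := ‖w‖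
  have hβ : 0 < β := (abs_nonneg _).trans_lt hv
  have hee : ⟪e, e⟫ = 1 := by rw [real_inner_self_eq_norm_sq, he, one_pow]
  have hew : ⟪e, w⟫ = 0 := by
    simp only [w, inner_sub_right, real_inner_smul_right, hee, mul_one, sub_self]
  have hvw : ⟪v, w⟫ = β ^ 2 := by
    rw [← real_inner_self_eq_norm_sq, inner_sub_left _ _ w, real_inner_smul_left, hew, mul_zero,
      sub_zero]
  obtain ⟨t, ht₁, ht₂⟩ : ∃ t, |⟪e, v⟫| / β ^ 2 < t ∧ t < 1 / β := by
    refine exists_between ?_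
    rw [div_lt_div_iff₀ (by positivity) hβ]
    nlinarith
  have ht : 0 < t := (by positivity : 0 ≤ |⟪e, v⟫| / β ^ 2).trans_lt ht₁
  have htβ : |⟪e, v⟫| < t * β ^ 2 := (div_lt_iff₀ (by positivity)).mp ht₁
  have hmem : ∀ s : ℝ, |s| = t → e + s • w ∈ openLorentzCone e := by
    intro s hs
    rw [mem_openLorentzCone, inner_add_right, real_inner_smul_right, hew, hee, mul_zero, add_zero,
      one_smul, add_sub_cancel_left, norm_smul, Real.norm_eq_abs, hs]
    exact (lt_div_iff₀ hβ).mp (by simpa using ht₂)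
  refine ⟨e + t • w, e + (-t) • w, hmem t (abs_of_pos ht), hmem (-t) (by simp [ht.le]), ?_, ?_⟩
  · rw [inner_add_right, real_inner_smul_right, hvw, real_inner_comm]
    linarith [neg_abs_le ⟪e, v⟫]
  · rw [inner_add_right, real_inner_smul_right, hvw, real_inner_comm]
    linarith [le_abs_self ⟪e, v⟫]

end LorentzCone

lemma lorentzCone_single {n : ℕ} (i : Fin n) :
    lorentzCone (EuclideanSpace.single i (1 : ℝ)) =
      {x | Real.sqrt (∑ j ∈ Finset.univ.erase i, x j ^ 2) ≤ x i} := by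
  ext x
  have hnorm : ‖x - x i • EuclideanSpace.single i (1 : ℝ)‖ =
      Real.sqrt (∑ j ∈ Finset.univ.erase i, x j ^ 2) := by
    rw [EuclideanSpace.norm_eq, ← Finset.sum_erase _ (a := i) (by simp)]
    refine congrArg _ (Finset.sum_congr rfl fun j hj => ?_)
    simp [Finset.ne_of_mem_erase hj]
  simp [mem_lorentzCone, EuclideanSpace.inner_single_left, hnorm]

lemma Real.sin_add_le_sin_add_sin {a b : ℝ} (ha : 0 ≤ a) (ha' : a ≤ Real.pi) (hb : 0 ≤ b)
    (hb' : b ≤ Real.pi) : Real.sin (a + b) ≤ Real.sin a + Real.sin b := by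
  rw [Real.sin_add]
  nlinarith [Real.sin_nonneg_of_nonneg_of_le_pi ha ha', Real.sin_nonneg_of_nonneg_of_le_pi hb hb',
    Real.cos_le_one a, Real.cos_le_one b]

lemma abs_real_inner_lt_one {E : Type*} [NormedAddCommGroup E] [InnerProductSpace ℝ E] {x y : E}
    (hx : ‖x‖ = 1) (hy : ‖y‖ = 1) (hyx : y ≠ x) (hyx' : y ≠ -x) : |⟪x, y⟫| < 1 :=
  abs_lt.mpr ⟨(neg_one_le_real_inner_of_norm_eq_one hx hy).lt_of_ne fun h =>
      hyx' (by rw [(inner_eq_neg_one_iff_of_norm_eq_one hx hy).mp h.symm, neg_neg]),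
    (inner_lt_one_iff_real_of_norm_eq_one hx hy).mpr hyx.symm⟩

lemma Real.sin_arccos_pos {c : ℝ} (h : |c| < 1) : 0 < Real.sin (Real.arccos c) := by
  obtain ⟨h₁, h₂⟩ := abs_lt.mp h
  rw [Real.sin_arccos]
  exact Real.sqrt_pos.mpr (by nlinarith)

section Geodesic

variable {n : ℕ} {x y : EuclideanSpace ℝ (Fin n)}

lemma geo_zero (x y : EuclideanSpace ℝ (Fin n)) : geo x y 0 = x := by
  simp [geo]

lemma continuous_geo (x y : EuclideanSpace ℝ (Fin n)) : Continuous (geo x y) := by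
  unfold geo
  fun_prop

lemma geo_eq_slerp (h : |⟪x, y⟫| < 1) (t : ℝ) :
    geo x y t = (Real.sin ((1 - t) * Real.arccos ⟪x, y⟫) / Real.sin (Real.arccos ⟪x, y⟫)) • x +
      (Real.sin (t * Real.arccos ⟪x, y⟫) / Real.sin (Real.arccos ⟪x, y⟫)) • y := by
  obtain ⟨h₁, h₂⟩ := abs_lt.mp h
  have hs : 0 < Real.sqrt (1 - ⟪x, y⟫ ^ 2) := Real.sqrt_pos.mpr (by nlinarith)
  rw [geo, Real.sin_arccos, sub_mul, one_mul, Real.sin_sub, Real.sin_arccos,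
    Real.cos_arccos h₁.le h₂.le]
  congr 2
  field_simp

lemma geo_one (h : |⟪x, y⟫| < 1) : geo x y 1 = y := by
  simp [geo_eq_slerp h, (Real.sin_arccos_pos h).ne']

lemma norm_geo (hx : ‖x‖ = 1) (hy : ‖y‖ = 1) (h : |⟪x, y⟫| < 1) (t : ℝ) : ‖geo x y t‖ = 1 := by
  obtain ⟨h₁, h₂⟩ := abs_lt.mp h
  rw [← pow_eq_one_iff_of_nonneg (norm_nonneg _) two_ne_zero, geo, norm_add_sq_real, norm_smul,
    norm_smul, real_inner_smul_left, real_inner_smul_right, hx, hy, mul_pow, mul_pow,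
    Real.norm_eq_abs, Real.norm_eq_abs, sq_abs, sq_abs]
  set c := ⟪x, y⟫
  set s := Real.sqrt (1 - c ^ 2)
  have hs : s ^ 2 = 1 - c ^ 2 := Real.sq_sqrt (by nlinarith)
  have hs0 : s ≠ 0 := (Real.sqrt_pos.mpr (by nlinarith)).ne'
  field_simp
  linear_combination (s ^ 2) * (Real.sin_sq_add_cos_sq (t * Real.arccos c)) -
    Real.sin (t * Real.arccos c) ^ 2 * hs

lemma exists_geo_eq_smul_add_smul (h : |⟪x, y⟫| < 1) {t : ℝ} (ht : t ∈ Set.Icc (0 : ℝ) 1) :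
    ∃ a b : ℝ, 0 ≤ a ∧ 0 ≤ b ∧ 1 ≤ a + b ∧ geo x y t = a • x + b • y := by
  obtain ⟨h₁, h₂⟩ := abs_lt.mp h
  set θ := Real.arccos ⟪x, y⟫
  have hθ : 0 < θ := Real.arccos_pos.mpr h₂
  have hθπ : θ ≤ Real.pi := Real.arccos_le_pi _
  have hsθ : 0 < Real.sin θ := Real.sin_arccos_pos h
  have h₀ : 0 ≤ t * θ := mul_nonneg ht.1 hθ.le
  have h₁' : 0 ≤ (1 - t) * θ := mul_nonneg (sub_nonneg.mpr ht.2) hθ.le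
  have hle : t * θ ≤ θ := mul_le_of_le_one_left hθ.le ht.2
  refine ⟨_, _, div_nonneg (Real.sin_nonneg_of_nonneg_of_le_pi h₁' (by nlinarith)) hsθ.le,
    div_nonneg (Real.sin_nonneg_of_nonneg_of_le_pi h₀ (hle.trans hθπ)) hsθ.le, ?_,
    geo_eq_slerp h t⟩
  rw [← add_div, one_le_div hsθ]
  calc Real.sin θ = Real.sin ((1 - t) * θ + t * θ) := by ring_nf
    _ ≤ _ := Real.sin_add_le_sin_add_sin h₁' (by nlinarith) h₀ (hle.trans hθπ)

lemma exists_inner_geo_eq_zero {v : EuclideanSpace ℝ (Fin n)} (h : |⟪x, y⟫| < 1)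
    (hx : 0 < ⟪v, x⟫) (hy : ⟪v, y⟫ < 0) : ∃ t ∈ Set.Icc (0 : ℝ) 1, ⟪v, geo x y t⟫ = 0 :=
  intermediate_value_Icc' zero_le_one
    ((continuous_const.inner (continuous_geo x y)).continuousOn)
    ⟨by rw [geo_one h]; exact hy.le, by rw [geo_zero]; exact hx.le⟩

end Geodesic

lemma min_le_mul_add_mul {a b p q : ℝ} (ha : 0 ≤ a) (hb : 0 ≤ b) (hab : 1 ≤ a + b) (hp : 0 ≤ p)
    (hq : 0 ≤ q) : min p q ≤ a * p + b * q := by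
  have hm : 0 ≤ min p q := le_min hp hq
  nlinarith [min_le_left p q, min_le_right p q]

lemma sub_mul_sq_le_max {c k p q r : ℝ} (hk : 0 ≤ k) (hp : 0 ≤ p) (hq : 0 ≤ q)
    (hr : min p q ≤ r) : c - k * r ^ 2 ≤ max (c - k * p ^ 2) (c - k * q ^ 2) := by
  rcases le_total p q with h | h
  · rw [min_eq_left h] at hr
    have : k * p ^ 2 ≤ k * r ^ 2 := by gcongr
    exact le_max_of_le_left (by linarith)
  · rw [min_eq_right h] at hr
    have : k * q ^ 2 ≤ k * r ^ 2 := by gcongr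
    exact le_max_of_le_right (by linarith)

section Quasiconvex

variable {n : ℕ} {e v : EuclideanSpace ℝ (Fin n)} {lam mu : ℝ}

lemma sphQuasiconvexOn_of_mem_lorentzCone (he : ‖e‖ = 1) (hv : v ∈ lorentzCone e) (hv0 : v ≠ 0)
    (hle : lam ≤ mu) :
    SphQuasiconvexOn (Metric.sphere 0 1 ∩ interior (lorentzCone e))
      (fun z => mu * ‖z‖ ^ 2 - (mu - lam) * ⟪v, z⟫ ^ 2) := by
  intro γ hγ hS t ht
  have hpos : ∀ s ∈ Set.Icc (0 : ℝ) 1, 0 < ⟪v, γ s⟫ := fun s hs =>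
    inner_pos_of_mem_interior (fun k hk => inner_nonneg_of_mem_lorentzCone he hv hk) hv0
      (hS s hs).2
  have hnorm : ∀ s ∈ Set.Icc (0 : ℝ) 1, ‖γ s‖ = 1 := fun s hs =>
    mem_sphere_zero_iff_norm.mp (hS s hs).1
  have h0 : (0 : ℝ) ∈ Set.Icc (0 : ℝ) 1 := ⟨le_rfl, zero_le_one⟩
  have h1 : (1 : ℝ) ∈ Set.Icc (0 : ℝ) 1 := ⟨zero_le_one, le_rfl⟩
  rcases hγ with ⟨x, y, hx, hy, hyx, hyx', hγ⟩ | ⟨x, w, -, -, -, hγ⟩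
  · have hxy : |⟪x, y⟫| < 1 := abs_real_inner_lt_one hx hy hyx hyx'
    obtain ⟨a, b, ha, hb, hab, hγt⟩ := exists_geo_eq_smul_add_smul hxy ht
    have hγ0 : γ 0 = x := by rw [hγ, geo_zero]
    have hγ1 : γ 1 = y := by rw [hγ, geo_one hxy]
    have hvt : ⟪v, γ t⟫ = a * ⟪v, γ 0⟫ + b * ⟪v, γ 1⟫ := by
      rw [hγ, hγt, hγ0, hγ1, inner_add_right, real_inner_smul_right, real_inner_smul_right]
    simp only [hnorm t ht, hnorm 0 h0, hnorm 1 h1, hvt]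
    exact sub_mul_sq_le_max (sub_nonneg.mpr hle) (hpos 0 h0).le (hpos 1 h1).le
      (min_le_mul_add_mul ha hb hab (hpos 0 h0).le (hpos 1 h1).le)
  · have hγ1 : γ 1 = -γ 0 := by simp [hγ]
    have := hpos 1 h1
    rw [hγ1, inner_neg_right] at this
    exact absurd (hpos 0 h0) (by linarith)

lemma exists_norm_eq_one_mem_openLorentzCone_inner_pos_neg (he : ‖e‖ = 1)
    (hv : |⟪e, v⟫| < ‖v - ⟪e, v⟫ • e‖) :
    ∃ x y : EuclideanSpace ℝ (Fin n), ‖x‖ = 1 ∧ ‖y‖ = 1 ∧ x ∈ openLorentzCone e ∧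
      y ∈ openLorentzCone e ∧ 0 < ⟪v, x⟫ ∧ ⟪v, y⟫ < 0 := by
  obtain ⟨x, y, hx, hy, hvx, hvy⟩ := exists_mem_openLorentzCone_inner_pos_neg he hv
  have hx0 := inv_pos.mpr (norm_pos_iff.mpr (ne_zero_of_mem_openLorentzCone hx))
  have hy0 := inv_pos.mpr (norm_pos_iff.mpr (ne_zero_of_mem_openLorentzCone hy))
  refine ⟨‖x‖⁻¹ • x, ‖y‖⁻¹ • y, norm_smul_inv_norm (ne_zero_of_mem_openLorentzCone hx),
    norm_smul_inv_norm (ne_zero_of_mem_openLorentzCone hy), smul_mem_openLorentzCone hx0 hx,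
    smul_mem_openLorentzCone hy0 hy, ?_, ?_⟩
  · rw [real_inner_smul_right]
    exact mul_pos hx0 hvx
  · rw [real_inner_smul_right]
    exact mul_neg_of_pos_of_neg hy0 hvy

lemma mem_or_neg_mem_lorentzCone_of_sphQuasiconvexOn (he : ‖e‖ = 1) (hlt : lam < mu)
    (hq : SphQuasiconvexOn (Metric.sphere 0 1 ∩ interior (lorentzCone e))
      (fun z => mu * ‖z‖ ^ 2 - (mu - lam) * ⟪v, z⟫ ^ 2)) :
    v ∈ lorentzCone e ∨ -v ∈ lorentzCone e := by
  by_contra! h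
  obtain ⟨x, y, hx, hy, hxC, hyC, hvx, hvy⟩ := exists_norm_eq_one_mem_openLorentzCone_inner_pos_neg
    he (abs_inner_lt_norm_of_not_mem_lorentzCone h.1 h.2)
  have hyx : y ≠ x := by
    rintro rfl
    linarith
  have hyx' : y ≠ -x := by
    rintro rfl
    have := (norm_nonneg _).trans_lt hxC
    have := (norm_nonneg _).trans_lt hyC
    rw [inner_neg_right] at this
    linarith
  have hxy : |⟪x, y⟫| < 1 := abs_real_inner_lt_one hx hy hyx hyx'
  have hgeo :
      ∀ t ∈ Set.Icc (0 : ℝ) 1, geo x y t ∈ Metric.sphere 0 1 ∩ interior (lorentzCone e) := by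
    intro t ht
    obtain ⟨a, b, ha, hb, hab, hγ⟩ := exists_geo_eq_smul_add_smul hxy ht
    refine ⟨mem_sphere_zero_iff_norm.mpr (norm_geo hx hy hxy t),
      openLorentzCone_subset_interior e ?_⟩
    rw [hγ]
    exact smul_add_smul_mem_openLorentzCone ha hb (by linarith) hxC hyC
  obtain ⟨t, ht, hvt⟩ := exists_inner_geo_eq_zero hxy hvx hvy
  have hmax := hq (geo x y) (Or.inl ⟨x, y, hx, hy, hyx, hyx', fun _ => rfl⟩) hgeo t ht
  simp only [geo_zero, geo_one hxy, norm_geo hx hy hxy, hx, hy, hvt] at hmax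
  have hk : 0 < mu - lam := sub_pos.mpr hlt
  rcases le_max_iff.mp hmax with h | h <;> nlinarith [mul_pos hk (pow_pos hvx 2),
    mul_pos hk (pow_pos (neg_pos.mpr hvy) 2)]

theorem sphQuasiconvexOn_iff_mem_or_neg_mem_lorentzCone (he : ‖e‖ = 1) (hv0 : v ≠ 0)
    (hlt : lam < mu) :
    SphQuasiconvexOn (Metric.sphere 0 1 ∩ interior (lorentzCone e))
        (fun z => mu * ‖z‖ ^ 2 - (mu - lam) * ⟪v, z⟫ ^ 2) ↔
      v ∈ lorentzCone e ∨ -v ∈ lorentzCone e := by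
  refine ⟨mem_or_neg_mem_lorentzCone_of_sphQuasiconvexOn he hlt, ?_⟩
  rintro (h | h)
  · exact sphQuasiconvexOn_of_mem_lorentzCone he h hv0 hlt.le
  · simpa only [inner_neg_left, neg_sq] using
      sphQuasiconvexOn_of_mem_lorentzCone he h (neg_ne_zero.mpr hv0) hlt.le

end Quasiconvex

section TwoEigenvalues

variable {E : Type*} [NormedAddCommGroup E] [InnerProductSpace ℝ E] {A : E →ₗ[ℝ] E} {v : E}
  {lam mu : ℝ}

lemma apply_eq_of_eigenvalues (hv : ‖v‖ = 1) (heig : A v = lam • v)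
    (hrest : ∀ x, ⟪v, x⟫ = 0 → A x = mu • x) (z : E) :
    A z = mu • z + (lam - mu) • ⟪v, z⟫ • v := by
  have hvv : ⟪v, v⟫ = 1 := by rw [real_inner_self_eq_norm_sq, hv, one_pow]
  have hperp : ⟪v, z - ⟪v, z⟫ • v⟫ = 0 := by
    rw [inner_sub_right, real_inner_smul_right, hvv, mul_one, sub_self]
  calc A z = A (⟪v, z⟫ • v) + A (z - ⟪v, z⟫ • v) := by rw [← map_add, add_sub_cancel]
    _ = ⟪v, z⟫ • lam • v + mu • (z - ⟪v, z⟫ • v) := by rw [map_smul, heig, hrest _ hperp]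
    _ = mu • z + (lam - mu) • ⟪v, z⟫ • v := by module

lemma inner_apply_self_eq_of_eigenvalues (hv : ‖v‖ = 1) (heig : A v = lam • v)
    (hrest : ∀ x, ⟪v, x⟫ = 0 → A x = mu • x) (z : E) :
    ⟪A z, z⟫ = mu * ‖z‖ ^ 2 - (mu - lam) * ⟪v, z⟫ ^ 2 := by
  rw [apply_eq_of_eigenvalues hv heig hrest, inner_add_left, real_inner_smul_left,
    real_inner_smul_left, real_inner_smul_left, real_inner_self_eq_norm_sq]
  ring

lemma eq_inner_smul_of_apply_eq_smul (hv : ‖v‖ = 1) (heig : A v = lam • v)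
    (hrest : ∀ x, ⟪v, x⟫ = 0 → A x = mu • x) (hne : lam ≠ mu) {w : E} (hw : A w = lam • w) :
    w = ⟪v, w⟫ • v := by
  rw [apply_eq_of_eigenvalues hv heig hrest] at hw
  have : (mu - lam) • (w - ⟪v, w⟫ • v) = 0 := by
    linear_combination (norm := module) hw
  exact sub_eq_zero.mp ((smul_eq_zero.mp this).resolve_left (sub_ne_zero.mpr hne.symm))

lemma exists_eigenvector_mem_iff {K : Set E} (hK : ∀ c : ℝ, 0 < c → ∀ x ∈ K, c • x ∈ K)
    (hv : ‖v‖ = 1) (heig : A v = lam • v) (hrest : ∀ x, ⟪v, x⟫ = 0 → A x = mu • x)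
    (hne : lam ≠ mu) : (∃ w ∈ K, w ≠ 0 ∧ A w = lam • w) ↔ v ∈ K ∨ -v ∈ K := by
  have hv0 : v ≠ 0 := norm_ne_zero_iff.mp (by rw [hv]; exact one_ne_zero)
  constructor
  · rintro ⟨w, hwK, hw0, hw⟩
    have hvw := eq_inner_smul_of_apply_eq_smul hv heig hrest hne hw
    set p := ⟪v, w⟫
    have hp0 : p ≠ 0 := fun h => hw0 (by rw [hvw, h, zero_smul])
    rcases hp0.lt_or_gt with hp | hp
    · refine Or.inr ?_
      convert hK _ (inv_pos.mpr (neg_pos.mpr hp)) w hwK using 1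
      rw [hvw, smul_smul, inv_mul_eq_div, div_neg, div_self hp0, neg_one_smul]
    · refine Or.inl ?_
      convert hK _ (inv_pos.mpr hp) w hwK using 1
      rw [hvw, smul_smul, inv_mul_cancel₀ hp0, one_smul]
  · rintro (h | h)
    · exact ⟨v, h, hv0, heig⟩
    · exact ⟨-v, h, neg_ne_zero.mpr hv0, by rw [map_neg, heig, smul_neg]⟩

end TwoEigenvalues

theorem stmt18 (n : ℕ) (hn : 3 ≤ n)
    (L : Set (EuclideanSpace ℝ (Fin n)))
    (hL : L = {x | Real.sqrt (∑ i ∈ Finset.univ.erase (⟨0, by omega⟩ : Fin n), x i ^ 2)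
        ≤ x (⟨0, by omega⟩ : Fin n)})
    (A : EuclideanSpace ℝ (Fin n) →ₗ[ℝ] EuclideanSpace ℝ (Fin n))
    (lam mu : ℝ) (hlt : lam < mu)
    (v1 : EuclideanSpace ℝ (Fin n)) (hv1 : ‖v1‖ = 1) (heig : A v1 = lam • v1)
    (hrest : ∀ x, ⟪v1, x⟫ = 0 → A x = mu • x) :
    SphQuasiconvexOn
        (Metric.sphere (0 : EuclideanSpace ℝ (Fin n)) 1 ∩ interior L)
        (fun x => ⟪A x, x⟫) ↔
      (∃ w ∈ L, w ≠ 0 ∧ A w = lam • w) := by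
  have hquad : (fun x => ⟪A x, x⟫) = fun x => mu * ‖x‖ ^ 2 - (mu - lam) * ⟪v1, x⟫ ^ 2 :=
    funext (inner_apply_self_eq_of_eigenvalues hv1 heig hrest)
  have hv0 : v1 ≠ 0 := norm_ne_zero_iff.mp (by rw [hv1]; exact one_ne_zero)
  rw [hquad, hL, ← lorentzCone_single, sphQuasiconvexOn_iff_mem_or_neg_mem_lorentzCone (by simp)
    hv0 hlt, exists_eigenvector_mem_iff (fun c hc x hx => smul_mem_lorentzCone hc.le hx) hv1 heig
    hrest hlt.ne]
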